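/- arXiv:2105.07974 — 6 statements merged into one kernel-verified Lean document; each statement's English description precedes it below -/
import Mathlib

section
/- For all integers n ≥ 1 and 0 ≤ k ≤ n-1, the following identity of rational numbers holds: (1/(k+2))·C(n, k+1)·C(n+k+1, k+1) = (1/(k+2))·C(n-1, k+1)·C(n+k+2, k+1) + (1/(k+1))·C(n-1, k)·C(n+k+1, k), where C(a,b) denotes the binomial coefficient (taken to be 0 when b > a or b < 0). -/
/-!
With `n = m + 1` and the denominators cleared, Pascal's rule applied to `C(m+1, k+1)` and to
`C(m+k+3, k+1)` leaves an identity that is a combination of the absorption identity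
`(N+1)·C(N,k) = (k+1)·(C(N,k) + C(N,k+1))` at `N = m` and at `N = m+k+2`.
-/

namespace Nat

theorem add_one_mul_choose_eq_add (n k : ℕ) :
    (n + 1) * n.choose k = n.choose (k + 1) * (k + 1) + n.choose k * (k + 1) := by
  rw [← Nat.add_mul, Nat.add_comm (choose _ _), ← choose_succ_succ, add_one_mul_choose_eq]

theorem add_one_mul_choose_mul_choose_eq (m k : ℕ) :
    (k + 1) * (m + 1).choose (k + 1) * (m + k + 2).choose (k + 1) =
      (k + 1) * m.choose (k + 1) * (m + k + 3).choose (k + 1) +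
        (k + 2) * m.choose k * (m + k + 2).choose k := by
  have hm := add_one_mul_choose_eq_add m k
  have hmk := add_one_mul_choose_eq_add (m + k + 2) k
  rw [choose_succ_succ' m k, choose_succ_succ' (m + k + 2) k]
  linear_combination (m + k + 2).choose k * hm - m.choose k * hmk

end Nat

theorem positive_A_face_identity_general (n k : ℕ) (hn : 1 ≤ n) :
    (1 / ((k : ℚ) + 2)) * (n.choose (k + 1) : ℚ) * ((n + k + 1).choose (k + 1) : ℚ) =
      (1 / ((k : ℚ) + 2)) * ((n - 1).choose (k + 1) : ℚ) * ((n + k + 2).choose (k + 1) : ℚ) +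
      (1 / ((k : ℚ) + 1)) * ((n - 1).choose k : ℚ) * ((n + k + 1).choose k : ℚ) := by
  obtain ⟨m, rfl⟩ : ∃ m, n = m + 1 := ⟨n - 1, by omega⟩
  have key := congrArg (Nat.cast : ℕ → ℚ) (Nat.add_one_mul_choose_mul_choose_eq m k)
  push_cast at key
  rw [Nat.add_sub_cancel, show m + 1 + k + 1 = m + k + 2 by omega,
    show m + 1 + k + 2 = m + k + 3 by omega]
  field_simp
  linear_combination key

/-- For `n ≥ 1` and `0 ≤ k ≤ n - 1`:
`(1/(k+2))·C(n,k+1)·C(n+k+1,k+1)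
  = (1/(k+2))·C(n-1,k+1)·C(n+k+2,k+1) + (1/(k+1))·C(n-1,k)·C(n+k+1,k)`. -/
theorem positive_A_face_identity (n k : ℕ) (hn : 1 ≤ n) (hk : k ≤ n - 1) :
    (1 / ((k : ℚ) + 2)) * (n.choose (k + 1) : ℚ) * ((n + k + 1).choose (k + 1) : ℚ) =
      (1 / ((k : ℚ) + 2)) * ((n - 1).choose (k + 1) : ℚ) * ((n + k + 2).choose (k + 1) : ℚ) +
      (1 / ((k : ℚ) + 1)) * ((n - 1).choose k : ℚ) * ((n + k + 1).choose k : ℚ) :=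
  positive_A_face_identity_general n k hn
end

section
/- For all integers n ≥ 2 and 0 ≤ k ≤ n-1, the following identity holds: C(n, k+1)·C(n+k, k+1) = (1/2)·( C(n, k+1)·C(n+k+1, k+1) + C(n-1, k+1)·C(n+k, k+1) ), where C(a,b) denotes the binomial coefficient (equal to 0 if b > a). -/
/-!
Write `a = C(n, k+1)` and `b = C(n+k, k+1)`. The absorption identity gives
`n·C(n+k+1, k+1) = (n+k+1)·b` and `n·C(n-1, k+1) = (n-k-1)·a`, so `n` times the right-hand sum is
`a·b·((n+k+1) + (n-k-1)) = 2n·a·b`. When `k + 1 > n` both sides vanish.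
-/

namespace Nat

theorem pred_choose_mul (n m : ℕ) : (n - 1).choose m * n = n.choose m * (n - m) := by
  rcases n with _ | n
  · simp
  · exact choose_mul_succ_eq n m

theorem add_choose_succ_mul (n k : ℕ) :
    (n + k).choose (k + 1) * (n + k + 1) = (n + k + 1).choose (k + 1) * n := by
  rw [choose_mul_succ_eq, show n + k + 1 - (k + 1) = n by omega]

theorem choose_mul_add_choose_add_pred_choose_mul (n k : ℕ) :
    n.choose (k + 1) * (n + k + 1).choose (k + 1) + (n - 1).choose (k + 1) * (n + k).choose (k + 1) =
      2 * (n.choose (k + 1) * (n + k).choose (k + 1)) := by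
  rcases lt_or_ge n (k + 1) with hlt | hle
  · simp [choose_eq_zero_of_lt hlt, choose_eq_zero_of_lt (show n - 1 < k + 1 by omega)]
  have hn : 0 < n := by omega
  apply Nat.eq_of_mul_eq_mul_right hn
  have hsum : n + k + 1 + (n - (k + 1)) = 2 * n := by omega
  calc (n.choose (k + 1) * (n + k + 1).choose (k + 1) +
          (n - 1).choose (k + 1) * (n + k).choose (k + 1)) * n
      = n.choose (k + 1) * ((n + k + 1).choose (k + 1) * n) +
          (n - 1).choose (k + 1) * n * (n + k).choose (k + 1) := by ring
    _ = n.choose (k + 1) * ((n + k).choose (k + 1) * (n + k + 1)) +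
          n.choose (k + 1) * (n - (k + 1)) * (n + k).choose (k + 1) := by
        rw [add_choose_succ_mul, pred_choose_mul]
    _ = n.choose (k + 1) * (n + k).choose (k + 1) * (n + k + 1 + (n - (k + 1))) := by ring
    _ = 2 * (n.choose (k + 1) * (n + k).choose (k + 1)) * n := by rw [hsum]; ring

end Nat

theorem positive_B_face_identity_general (n k : ℕ) :
    (n.choose (k + 1) : ℚ) * ((n + k).choose (k + 1) : ℚ) =
      (1 / 2 : ℚ) * ((n.choose (k + 1) : ℚ) * ((n + k + 1).choose (k + 1) : ℚ) +
        ((n - 1).choose (k + 1) : ℚ) * ((n + k).choose (k + 1) : ℚ)) := by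
  have h := congrArg (Nat.cast : ℕ → ℚ) (Nat.choose_mul_add_choose_add_pred_choose_mul n k)
  push_cast at h
  linarith

/-- For `n ≥ 2` and `0 ≤ k ≤ n - 1`:
`C(n,k+1)·C(n+k,k+1) = (1/2)·(C(n,k+1)·C(n+k+1,k+1) + C(n-1,k+1)·C(n+k,k+1))`. -/
theorem positive_B_face_identity (n k : ℕ) (hn : 2 ≤ n) (hk : k ≤ n - 1) :
    (n.choose (k + 1) : ℚ) * ((n + k).choose (k + 1) : ℚ) =
      (1 / 2 : ℚ) * ((n.choose (k + 1) : ℚ) * ((n + k + 1).choose (k + 1) : ℚ) +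
        ((n - 1).choose (k + 1) : ℚ) * ((n + k).choose (k + 1) : ℚ)) :=
  positive_B_face_identity_general n k
end

section
/- For every integer n ≥ 1, the alternating sum ∑_{k=0}^{n-1} (-1)^k · (1/(k+2))·C(n,k+1)·C(n+k+3,k+1) equals 1 + (-1)^{n-1}. -/
/-!
Since `C(n, k+1)/(k+2) = C(n+1, k+2)/(n+1)` and `C(n+k+3, k+1) = C((n+1) + (k+2), n+2)`, the sum is
`1/(n+1)` times the alternating sum `∑_j (-1)^j C(n+1, j) C(n+1+j, n+2)` with its terms `j = 0, 1`
removed. The full alternating sum is an `(n+1)`-st forward difference of `x ↦ C(x, n+2)`, namely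
`(-1)^(n+1) C(n+1, 1)`; the removed terms contribute `0` and `-(n+1)`.
-/

open Finset

theorem Nat.cast_choose_div_add_one {K : Type*} [Field K] [CharZero K] (n k : ℕ) :
    (n.choose k : K) / (k + 1) = (n + 1).choose (k + 1) / (n + 1) := by
  rw [div_eq_div_iff (Nat.cast_add_one_ne_zero k) (Nat.cast_add_one_ne_zero n), mul_comm]
  exact_mod_cast Nat.add_one_mul_choose_eq n k

theorem Nat.sum_range_neg_one_pow_sub_mul_choose_mul_choose (m j x : ℕ) :
    ∑ k ∈ range (m + 1), (-1 : ℤ) ^ (m - k) * m.choose k * (x + k).choose (m + j) =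
      x.choose j := by
  have h := fwdDiff_iter_eq_sum_shift 1 (fun x ↦ x.choose (m + j) : ℕ → ℤ) m x
  rw [fwdDiff_iter_choose] at h
  simpa using h.symm

theorem Nat.sum_range_neg_one_pow_mul_choose_mul_choose (m j x : ℕ) :
    ∑ k ∈ range (m + 1), (-1 : ℤ) ^ k * m.choose k * (x + k).choose (m + j) =
      (-1) ^ m * x.choose j := by
  rw [← Nat.sum_range_neg_one_pow_sub_mul_choose_mul_choose, mul_sum]
  refine sum_congr rfl fun k hk ↦ ?_
  obtain ⟨i, rfl⟩ := Nat.exists_eq_add_of_le (mem_range_succ_iff.mp hk)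
  rw [Nat.add_sub_cancel_left]
  calc (-1 : ℤ) ^ k * (k + i).choose k * (x + k).choose (k + i + j)
      = (-1) ^ k * (-1) ^ (i + i) * (k + i).choose k * (x + k).choose (k + i + j) := by
        rw [Even.neg_one_pow ⟨i, rfl⟩]; ring
    _ = (-1) ^ (k + i) * ((-1) ^ i * (k + i).choose k * (x + k).choose (k + i + j)) := by ring

theorem Nat.sum_range_neg_one_pow_mul_choose_add_two_mul_choose (n : ℕ) :
    ∑ k ∈ range n, (-1 : ℤ) ^ k * (n + 1).choose (k + 2) * (n + k + 3).choose (k + 1) =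
      (n + 1) * (1 + (-1) ^ (n + 1)) := by
  have h := Nat.sum_range_neg_one_pow_mul_choose_mul_choose (n + 1) 1 (n + 1)
  rw [sum_range_succ', sum_range_succ'] at h
  have hsymm (k : ℕ) : (n + 1 + (k + 1 + 1)).choose (n + 1 + 1) = (n + k + 3).choose (k + 1) := by
    rw [show n + 1 + (k + 1 + 1) = n + k + 3 by omega]
    exact Nat.choose_symm_of_eq_add (by omega)
  have hshift : ∑ k ∈ range n, (-1 : ℤ) ^ (k + 1 + 1) * (n + 1).choose (k + 1 + 1) *
      (n + 1 + (k + 1 + 1)).choose (n + 1 + 1) =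
      ∑ k ∈ range n, (-1 : ℤ) ^ k * (n + 1).choose (k + 2) * (n + k + 3).choose (k + 1) :=
    sum_congr rfl fun k _ ↦ by rw [hsymm]; ring
  rw [hshift] at h
  simp only [zero_add, Nat.choose_succ_self, Nat.choose_self, Nat.choose_one_right] at h
  push_cast at h
  linear_combination h

/-- The alternating sum of the face numbers of the cluster complex of type `A_n`:
`∑_{k=0}^{n-1} (-1)^k (1/(k+2))·C(n,k+1)·C(n+k+3,k+1) = 1 + (-1)^{n-1}`. -/
theorem euler_char_A (n : ℕ) (hn : 1 ≤ n) :
    ∑ k ∈ Finset.range n,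
        (-1 : ℚ) ^ k * (1 / ((k : ℚ) + 2)) * (n.choose (k + 1) : ℚ) *
          ((n + k + 3).choose (k + 1) : ℚ) =
      1 + (-1 : ℚ) ^ (n - 1) := by
  have hterm (k : ℕ) : (-1 : ℚ) ^ k * (1 / ((k : ℚ) + 2)) * (n.choose (k + 1) : ℚ) *
      ((n + k + 3).choose (k + 1) : ℚ) =
      1 / ((n : ℚ) + 1) * ((-1) ^ k * (n + 1).choose (k + 2) * (n + k + 3).choose (k + 1)) := by
    have h := Nat.cast_choose_div_add_one (K := ℚ) n (k + 1)
    push_cast at h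
    calc _ = (-1 : ℚ) ^ k * ((n.choose (k + 1) : ℚ) / (k + 1 + 1)) *
          ((n + k + 3).choose (k + 1) : ℚ) := by ring
      _ = _ := by rw [h]; ring
  have hsum : ∑ k ∈ range n, (-1 : ℚ) ^ k * (n + 1).choose (k + 2) * (n + k + 3).choose (k + 1) =
      (n + 1) * (1 + (-1) ^ (n + 1)) := by
    exact_mod_cast Nat.sum_range_neg_one_pow_mul_choose_add_two_mul_choose n
  rw [sum_congr rfl fun k _ ↦ hterm k, ← mul_sum, hsum]
  obtain ⟨m, rfl⟩ := Nat.exists_eq_add_of_le' hn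
  field_simp
  simp only [Nat.add_sub_cancel, pow_succ]
  ring
end

section
/- For every integer n ≥ 1, the alternating sum ∑_{k=0}^{n-1} (-1)^k · C(n,k+1)·C(n+k+1,k+1) equals 1 + (-1)^{n-1}. -/
/-!
Shifting the index, the claim is `∑_{j=0}^{n} (-1)^j C(n,j) C(n+j,j) = (-1)^n`. By upper negation,
`(-1)^j C(n+j,j) = C(-(n+1), j)`, so the left side is the Chu–Vandermonde convolution of `C(n, ·)` and
`C(-(n+1), ·)`, that is `C(-1, n) = (-1)^n`.
-/

open Finset

theorem Ring.choose_neg_natCast_succ (n j : ℕ) :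
    Ring.choose (-(n + 1 : ℤ)) j = (-1) ^ j * (n + j).choose j := by
  rw [Ring.choose_neg, Units.smul_def, Int.coe_negOnePow_natCast, smul_eq_mul,
    show (n + 1 + j - 1 : ℤ) = ((n + j : ℕ) : ℤ) by push_cast; ring, Ring.choose_natCast]

theorem sum_neg_one_pow_mul_choose_mul_add_choose (n : ℕ) :
    ∑ j ∈ range (n + 1), (-1 : ℤ) ^ j * n.choose j * (n + j).choose j = (-1) ^ n := by
  have vandermonde := Ring.add_choose_eq n (Commute.all (-(n + 1 : ℤ)) n)
  rw [Nat.sum_antidiagonal_eq_sum_range_succ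
      (fun i j => Ring.choose (-(n + 1 : ℤ)) i * Ring.choose (n : ℤ) j),
    show -(n + 1 : ℤ) + n = -((0 : ℕ) + 1) by push_cast; ring,
    Ring.choose_neg_natCast_succ] at vandermonde
  simp only [zero_add, Nat.choose_self, Nat.cast_one, mul_one] at vandermonde
  rw [vandermonde]
  refine sum_congr rfl fun j hj => ?_
  rw [Ring.choose_neg_natCast_succ, Ring.choose_natCast,
    Nat.choose_symm (by simpa [Nat.lt_succ_iff] using hj)]
  ring

/-- The alternating sum of the face numbers of the cluster complex of type `B_n`:
`∑_{k=0}^{n-1} (-1)^k C(n,k+1)·C(n+k+1,k+1) = 1 + (-1)^{n-1}`. -/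
theorem euler_char_B (n : ℕ) (hn : 1 ≤ n) :
    ∑ k ∈ Finset.range n,
        (-1 : ℚ) ^ k * (n.choose (k + 1) : ℚ) * ((n + k + 1).choose (k + 1) : ℚ) =
      1 + (-1 : ℚ) ^ (n - 1) := by
  obtain ⟨m, rfl⟩ := Nat.exists_eq_add_of_le' hn
  have full_sum : ∑ k ∈ range (m + 1), (-1 : ℚ) ^ (k + 1) * ((m + 1).choose (k + 1) : ℚ) *
      ((m + 1 + (k + 1)).choose (k + 1) : ℚ) + 1 = (-1) ^ (m + 1) := by
    have h := sum_neg_one_pow_mul_choose_mul_add_choose (m + 1)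
    rw [sum_range_succ'] at h
    exact_mod_cast (by simpa using h)
  have negated : ∑ k ∈ range (m + 1), (-1 : ℚ) ^ k * ((m + 1).choose (k + 1) : ℚ) *
      ((m + 1 + k + 1).choose (k + 1) : ℚ) = -∑ k ∈ range (m + 1), (-1 : ℚ) ^ (k + 1) *
      ((m + 1).choose (k + 1) : ℚ) * ((m + 1 + (k + 1)).choose (k + 1) : ℚ) := by
    rw [← sum_neg_distrib]
    exact sum_congr rfl fun k _ => by rw [← add_assoc]; ring
  rw [negated, Nat.add_sub_cancel]
  linear_combination -full_sum
end

section
/- For every integer n ≥ 2, the alternating sum ∑_{k=0}^{n-1} (-1)^k · C(n,k+1)·( C(n+k+1,k+1) − C(n+k-1,k) ) equals 1 + (-1)^{n-1}. -/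
/-!
Put `F j = C(j + n, n) - C(j + n - 2, n - 1)`, so that the `k`-th summand is
`(-1)^k C(n, k+1) F(k+1)`. Adding the term `j = 0` completes the sum to
`∑_{j ≤ n} (-1)^j C(n, j) F(j) = (-1)^n Δⁿ F(0)`. In `j`, `C(j + n, n)` is a polynomial of
degree `n` whose `n`-th forward difference is `1`, while `C(j + n - 2, n - 1)` has degree
`n - 1` and is killed by `Δⁿ`. As `F(0) = 1`, the sum is `1 - (-1)^n`.
-/

open Finset fwdDiff

-- `Δ_[1] ^[n]` needs the space: `]^` is a token of the exterior power notation.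
theorem neg_one_pow_mul_fwdDiff_iter_eq_sum {R : Type*} [CommRing R] (f : ℕ → R) (n : ℕ) :
    (-1) ^ n * Δ_[1] ^[n] f 0 = ∑ j ∈ range (n + 1), (-1) ^ j * n.choose j * f j := by
  rw [fwdDiff_iter_eq_sum_shift, mul_sum]
  refine sum_congr rfl fun j hj ↦ ?_
  obtain ⟨i, rfl⟩ := Nat.exists_eq_add_of_le (Nat.lt_succ_iff.mp (mem_range.mp hj))
  have hsign : (-1 : R) ^ (j + i) * (-1) ^ i = (-1) ^ j := by
    rw [pow_add, mul_assoc, ← pow_add, Even.neg_one_pow ⟨i, rfl⟩, mul_one]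
  simp only [Nat.add_sub_cancel_left, zsmul_eq_mul, zero_add, smul_eq_mul, mul_one]
  push_cast
  linear_combination ((j + i).choose j * f j : R) * hsign

theorem alternating_sum_range_choose_succ_mul {R : Type*} [CommRing R] (f : ℕ → R) (n : ℕ) :
    ∑ k ∈ range n, (-1) ^ k * n.choose (k + 1) * f (k + 1) =
      f 0 - (-1) ^ n * Δ_[1] ^[n] f 0 := by
  rw [neg_one_pow_mul_fwdDiff_iter_eq_sum, sum_range_succ']
  simp only [pow_succ, mul_neg_one, neg_mul, sum_neg_distrib]
  simp

theorem fwdDiff_iter_choose_add (m n s y : ℕ) :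
    Δ_[1] ^[n] (fun x ↦ (x + m).choose (n + s) : ℕ → ℤ) y = (y + m).choose s := by
  rw [fwdDiff_iter_comp_add 1 (fun x : ℕ ↦ (x.choose (n + s) : ℤ)) m n y, fwdDiff_iter_choose]

theorem fwdDiff_iter_choose_add_of_lt (m : ℕ) {n r : ℕ} (h : r < n) :
    Δ_[1] ^[n] (fun x ↦ (x + m).choose r : ℕ → ℤ) = 0 := by
  obtain ⟨s, rfl⟩ := Nat.exists_eq_add_of_lt h
  have hconst : Δ_[1] ^[r] (fun x ↦ (x + m).choose r : ℕ → ℤ) = fun _ ↦ 1 := by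
    funext y
    simpa using fwdDiff_iter_choose_add m r 0 y
  rw [show r + s + 1 = s + 1 + r by omega, Function.iterate_add_apply, hconst,
    Function.iterate_succ_apply, fwdDiff_const]
  exact Function.iterate_fixed (fwdDiff_const 1 (0 : ℤ)) s

/-- The alternating sum of the face numbers of the cluster complex of type `D_n`:
`∑_{k=0}^{n-1} (-1)^k C(n,k+1)·(C(n+k+1,k+1) − C(n+k-1,k)) = 1 + (-1)^{n-1}`, `n ≥ 2`. -/
theorem euler_char_D (n : ℕ) (hn : 2 ≤ n) :
    ∑ k ∈ Finset.range n,
        (-1 : ℚ) ^ k * (n.choose (k + 1) : ℚ) *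
          (((n + k + 1).choose (k + 1) : ℚ) - ((n + k - 1).choose k : ℚ)) =
      1 + (-1 : ℚ) ^ (n - 1) := by
  set f : ℕ → ℤ := fun j ↦ (j + n).choose n
  set g : ℕ → ℤ := fun j ↦ (j + (n - 2)).choose (n - 1)
  have hf : ∀ k, f (k + 1) = (n + k + 1).choose (k + 1) := fun k ↦ by
    change ((k + 1 + n).choose n : ℤ) = _
    rw [show k + 1 + n = n + (k + 1) by omega, Nat.choose_symm_add, add_assoc]
  have hg : ∀ k, g (k + 1) = (n + k - 1).choose k := fun k ↦ by
    change ((k + 1 + (n - 2)).choose (n - 1) : ℤ) = _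
    rw [show k + 1 + (n - 2) = n - 1 + k by omega, Nat.choose_symm_add,
      show n - 1 + k = n + k - 1 by omega]
  have hg0 : g 0 = 0 := by simp [g, Nat.choose_eq_zero_of_lt (show n - 2 < n - 1 by omega)]
  have hΔf : Δ_[1] ^[n] f 0 = 1 := by simpa using fwdDiff_iter_choose_add n n 0 0
  have hΔg : Δ_[1] ^[n] g 0 = 0 := by
    rw [fwdDiff_iter_choose_add_of_lt (n - 2) (show n - 1 < n by omega), Pi.zero_apply]
  have key : ∑ k ∈ range n, (-1 : ℤ) ^ k * n.choose (k + 1) * (f (k + 1) - g (k + 1)) =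
      1 - (-1) ^ n := by
    simp only [mul_sub, sum_sub_distrib, alternating_sum_range_choose_succ_mul, hg0, hΔf, hΔg]
    simp [f]
  have hsign : (-1 : ℚ) ^ n = -(-1) ^ (n - 1) := by
    obtain ⟨m, rfl⟩ : ∃ m, n = m + 1 := ⟨n - 1, by omega⟩
    rw [pow_succ, Nat.add_sub_cancel, mul_neg_one]
  have hcast := congrArg (Int.cast : ℤ → ℚ) key
  push_cast [hf, hg] at hcast
  rw [hcast, hsign, sub_neg_eq_add]
end

section
/- Let m ≥ 5 and label the vertices of a convex m-gon by ZMod m. Fix a vertex v and let the fan triangulation at v be the set of all diagonals {v, w} with w distinct from v, v-1, v+1. Then {v-1, v+1} is the unique diagonal of the m-gon that crosses every diagonal of the fan triangulation at v. -/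
/-- Two vertices of the `m`-gon (labelled by `ZMod m`) are adjacent if they differ by `±1`. -/
def AdjacentVert {m : ℕ} (a b : ZMod m) : Prop := a - b = 1 ∨ b - a = 1

/-- A diagonal is an (unordered) pair of distinct, non-adjacent vertices. -/
def IsDiagonal {m : ℕ} (a b : ZMod m) : Prop := a ≠ b ∧ ¬ AdjacentVert a b

/-- `x` lies strictly between `a` and `b` on the positively oriented open arc from `a` to `b`. -/
def StrictlyBtw {m : ℕ} (a x b : ZMod m) : Prop :=
  0 < (x - a).val ∧ (x - a).val < (b - a).val

/-- The diagonals `{a, b}` and `{c, d}` cross: exactly one of `c, d` lies strictly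
between `a` and `b` (on one open arc) and the other lies strictly on the other open arc. -/
def Crosses {m : ℕ} (a b c d : ZMod m) : Prop :=
  (StrictlyBtw a c b ∧ StrictlyBtw b d a) ∨ (StrictlyBtw a d b ∧ StrictlyBtw b c a)

/-!
Measure every vertex `x` by its offset `(x - v).val ∈ [0, m)` from `v`. The fan diagonal
`{v, w}` with offset `k ∈ (1, m - 1)` is crossed by `{c, d}` exactly when `k` lies strictly
between the (nonzero) offsets of `c` and `d`. Testing `k = 2` and `k = m - 2` forces these
offsets to be `1` and `m - 1`, i.e. `{c, d} = {v + 1, v - 1}`; conversely `1` and `m - 1`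
enclose every `k ∈ (1, m - 1)`.
-/

namespace ZMod

variable {m : ℕ} [NeZero m]

theorem val_sub_of_lt {a b : ZMod m} (h : a.val < b.val) : (a - b).val = m + a.val - b.val := by
  have : NeZero b := ⟨by rintro rfl; simp at h⟩
  have hb := b.val_lt
  rw [sub_eq_add_neg, val_add_of_lt] <;> rw [val_neg_of_ne_zero] <;> omega

theorem val_sub_left_inj {x y v : ZMod m} : (x - v).val = (y - v).val ↔ x = y :=
  (val_injective m).eq_iff.trans sub_left_inj

end ZMod

section Offsets

variable {m : ℕ} [NeZero m] {v w x c d : ZMod m}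

theorem strictlyBtw_iff_val_sub_lt (hw : w ≠ v) :
    StrictlyBtw w x v ↔ (w - v).val < (x - v).val := by
  have hk : 0 < (w - v).val := ZMod.val_pos.2 (sub_ne_zero.2 hw)
  have : NeZero (w - v) := ⟨sub_ne_zero.2 hw⟩
  have hvw : (v - w).val = m - (w - v).val := by rw [← neg_sub, ZMod.val_neg_of_ne_zero]
  have hx := (x - v).val_lt
  rw [StrictlyBtw, show x - w = (x - v) - (w - v) by ring, hvw]
  rcases le_or_gt (w - v).val (x - v).val with h | h
  · rw [ZMod.val_sub h]; omega
  · rw [ZMod.val_sub_of_lt h]; omega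

theorem crosses_iff_val_sub (hw : w ≠ v) :
    Crosses v w c d ↔
      (0 < (c - v).val ∧ (c - v).val < (w - v).val ∧ (w - v).val < (d - v).val) ∨
      (0 < (d - v).val ∧ (d - v).val < (w - v).val ∧ (w - v).val < (c - v).val) := by
  rw [Crosses, strictlyBtw_iff_val_sub_lt hw, strictlyBtw_iff_val_sub_lt hw]
  simp only [StrictlyBtw, and_assoc]

theorem eq_add_one_iff_val_sub (hm : 1 < m) : x = v + 1 ↔ (x - v).val = 1 := by
  have : Fact (1 < m) := ⟨hm⟩
  rw [← ZMod.val_sub_left_inj (v := v), add_sub_cancel_left, ZMod.val_one, eq_comm]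

theorem eq_sub_one_iff_val_sub (hm : 1 < m) : x = v - 1 ↔ (x - v).val = m - 1 := by
  have : Fact (1 < m) := ⟨hm⟩
  have : NeZero (1 : ZMod m) := ⟨one_ne_zero⟩
  rw [← ZMod.val_sub_left_inj (v := v), sub_sub_cancel_left, ZMod.val_neg_of_ne_zero,
    ZMod.val_one, eq_comm]

theorem fan_vertex_iff_val_sub (hm : 1 < m) :
    (w ≠ v ∧ w ≠ v - 1 ∧ w ≠ v + 1) ↔ 1 < (w - v).val ∧ (w - v).val < m - 1 := by
  simp only [ne_eq, eq_sub_one_iff_val_sub hm, eq_add_one_iff_val_sub hm, ← sub_eq_zero (a := w),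
    ← ZMod.val_eq_zero]
  have := (w - v).val_lt
  omega

theorem forall_crosses_fan_iff (hm : 1 < m) :
    (∀ w : ZMod m, w ≠ v → w ≠ v - 1 → w ≠ v + 1 → Crosses v w c d) ↔
      ∀ k : ℕ, 1 < k → k < m - 1 →
        (0 < (c - v).val ∧ (c - v).val < k ∧ k < (d - v).val) ∨
        (0 < (d - v).val ∧ (d - v).val < k ∧ k < (c - v).val) := by
  constructor
  · intro h k hk1 hk2
    have hval : (v + k - v).val = k := by
      rw [add_sub_cancel_left, ZMod.val_natCast_of_lt (by omega)]
    obtain ⟨hv, hv1, hv2⟩ :=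
      (fan_vertex_iff_val_sub hm (w := v + (k : ZMod m))).2 (by rw [hval]; exact ⟨hk1, hk2⟩)
    simpa only [crosses_iff_val_sub hv, hval] using h _ hv hv1 hv2
  · intro h w hv hv1 hv2
    obtain ⟨hk1, hk2⟩ := (fan_vertex_iff_val_sub hm).1 ⟨hv, hv1, hv2⟩
    exact (crosses_iff_val_sub hv).2 (h _ hk1 hk2)

end Offsets

theorem forall_strictly_between_iff {m p q : ℕ} (hm : 4 ≤ m) (hp : p < m) (hq : q < m) :
    (∀ k : ℕ, 1 < k → k < m - 1 →
      (0 < p ∧ p < k ∧ k < q) ∨ (0 < q ∧ q < k ∧ k < p)) ↔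
      (p = m - 1 ∧ q = 1) ∨ (p = 1 ∧ q = m - 1) := by
  constructor
  · intro h
    have := h 2 (by omega) (by omega)
    have := h (m - 2) (by omega) (by omega)
    omega
  · intro h k _ _
    omega

theorem isDiagonal_sub_one_add_one {m : ℕ} (hm : 4 ≤ m) (v : ZMod m) :
    IsDiagonal (v - 1) (v + 1) := by
  have ne_zero (k : ℕ) (hk0 : 0 < k) (hk : k < m) : (k : ZMod m) ≠ 0 := fun h =>
    hk0.ne' (Nat.eq_zero_of_dvd_of_lt ((ZMod.natCast_eq_zero_iff k m).1 h) hk)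
  refine ⟨fun h => ne_zero 2 (by omega) (by omega) ?_, ?_⟩
  · push_cast; linear_combination -h
  rintro (h | h)
  · exact ne_zero 3 (by omega) (by omega) (by push_cast; linear_combination -h)
  · exact ne_zero 1 (by omega) (by omega) (by push_cast; linear_combination h)

/-- For `m ≥ 5` and a vertex `v`, the fan triangulation at `v` consists of the diagonals
`{v, w}` with `w ∉ {v, v - 1, v + 1}`. Then `{v - 1, v + 1}` is the unique diagonal of
the `m`-gon crossing every diagonal of the fan triangulation at `v`. -/
theorem unique_diagonal_crossing_fan {m : ℕ} (hm : 5 ≤ m) (v : ZMod m) :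
    IsDiagonal (v - 1) (v + 1) ∧
      ∀ c d : ZMod m, IsDiagonal c d →
        ((∀ w : ZMod m, w ≠ v → w ≠ v - 1 → w ≠ v + 1 → Crosses v w c d) ↔
          ({c, d} : Finset (ZMod m)) = {v - 1, v + 1}) := by
  have : NeZero m := ⟨by omega⟩
  refine ⟨isDiagonal_sub_one_add_one (by omega) v, fun c d _ => ?_⟩
  rw [forall_crosses_fan_iff (by omega),
    forall_strictly_between_iff (by omega) (c - v).val_lt (d - v).val_lt, ← Finset.coe_inj,
    Finset.coe_pair, Finset.coe_pair, Set.pair_eq_pair_iff, eq_sub_one_iff_val_sub (by omega),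
    eq_sub_one_iff_val_sub (by omega), eq_add_one_iff_val_sub (by omega),
    eq_add_one_iff_val_sub (by omega)]
end
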